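/- Let C be cyclic of order 2^n, n ≥ 3, σ ∈ {*, ⊛}, and for 0 ≤ i < 2^n set H_i^σ = { h ∈ V(F_2 C) : h h^σ (1+a)^i (1+a^σ)^i ∈ F_2 C² }. If i is odd and i < 2^{n-1}, then H_i^σ is empty, that is, no normalized unit h ∈ V(F_2 C) satisfies h h^σ (1+a)^i (1+a^σ)^i ∈ F_2 C². -/

import Mathlib

open MonoidAlgebra Finset

noncomputable section

/-- The cyclic group of order `2^n`, written multiplicatively. -/
abbrev Cgrp (n : ℕ) : Type := Multiplicative (ZMod (2 ^ n))

/-- The group algebra `F₂C` of the cyclic group of order `2^n` over the field of two elements. -/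
abbrev FC (n : ℕ) : Type := MonoidAlgebra (ZMod 2) (Cgrp n)

/-- The augmentation map `χ : F₂C → F₂`. -/
def aug (n : ℕ) : FC n →ₐ[ZMod 2] ZMod 2 :=
  MonoidAlgebra.lift (ZMod 2) (ZMod 2) (Cgrp n) 1

/-- The generator `a` of the cyclic group `C`. -/
def agen (n : ℕ) : Cgrp n := Multiplicative.ofAdd (1 : ZMod (2 ^ n))

/-- The generator `a` viewed inside the group algebra `F₂C`. -/
def A (n : ℕ) : FC n := MonoidAlgebra.of (ZMod 2) (Cgrp n) (agen n)

/-- Group elements of `C` as elements of the group algebra. -/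
def Gel (n : ℕ) (i : ZMod (2 ^ n)) : FC n :=
  MonoidAlgebra.of (ZMod 2) (Cgrp n) (Multiplicative.ofAdd i)

/-- The involution `*` of `F₂C` induced by `a ↦ a⁻¹`. -/
def starOne (n : ℕ) : FC n ≃ₐ[ZMod 2] FC n :=
  MonoidAlgebra.domCongr (ZMod 2) (ZMod 2) (MulEquiv.inv (Cgrp n))

/-- The scalar `2^(n-1) - 1` in `ZMod (2^n)`. -/
def cf (n : ℕ) : ZMod (2 ^ n) := 2 ^ (n - 1) - 1

lemma two_pow_zmod (n : ℕ) : ((2 : ZMod (2 ^ n))) ^ n = 0 := by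
  have h : ((2 ^ n : ℕ) : ZMod (2 ^ n)) = 0 := ZMod.natCast_self _
  push_cast at h
  exact h

lemma cf_sq (n : ℕ) (hn : 2 ≤ n) : cf n * cf n = 1 := by
  have h0 := two_pow_zmod n
  have e1 : (2 : ZMod (2 ^ n)) ^ (n - 1) * 2 ^ (n - 1) = 0 := by
    rw [← pow_add]
    have h : n - 1 + (n - 1) = n + (n - 2) := by omega
    rw [h, pow_add, h0, zero_mul]
  have e2 : (2 : ZMod (2 ^ n)) * 2 ^ (n - 1) = 0 := by
    have h : (2 : ZMod (2 ^ n)) * 2 ^ (n - 1) = 2 ^ (n - 1 + 1) := (pow_succ' 2 (n-1)).symm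
    rw [h]
    have h' : n - 1 + 1 = n := by omega
    rw [h', h0]
  have key : cf n * cf n = 2 ^ (n - 1) * 2 ^ (n - 1) - 2 * 2 ^ (n - 1) + 1 := by
    unfold cf; ring
  rw [key, e1, e2]; ring

/-- The automorphism `z ↦ (2^(n-1)-1)·z` of `ZMod (2^n)`. -/
def thetaAdd (n : ℕ) (hn : 2 ≤ n) : ZMod (2 ^ n) ≃+ ZMod (2 ^ n) where
  toFun z := cf n * z
  invFun z := cf n * z
  left_inv z := by show cf n * (cf n * z) = z; rw [← mul_assoc, cf_sq n hn, one_mul]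
  right_inv z := by show cf n * (cf n * z) = z; rw [← mul_assoc, cf_sq n hn, one_mul]
  map_add' x y := mul_add _ _ _

/-- The automorphism `a ↦ a^(2^(n-1)-1)` of `C`. -/
def theta (n : ℕ) (hn : 2 ≤ n) : Cgrp n ≃* Cgrp n :=
  AddEquiv.toMultiplicative (thetaAdd n hn)

/-- The involution `⊛` of `F₂C` induced by `a ↦ a^(2^(n-1)-1)`. -/
def starTwo (n : ℕ) (hn : 2 ≤ n) : FC n ≃ₐ[ZMod 2] FC n :=
  MonoidAlgebra.domCongr (ZMod 2) (ZMod 2) (theta n hn)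

/-- The group `V(F₂C)` of normalized units, as a subgroup of the unit group of `F₂C`. -/
def Vgrp (n : ℕ) : Subgroup (FC n)ˣ where
  carrier := {u | aug n (↑u : FC n) = 1}
  one_mem' := by simp [Set.mem_setOf_eq]
  mul_mem' := by
    intro u v hu hv
    simp only [Set.mem_setOf_eq, Units.val_mul, map_mul] at *
    rw [hu, hv, one_mul]
  inv_mem' := by
    intro u hu
    simp only [Set.mem_setOf_eq] at *
    have h : aug n ((↑u : FC n) * (↑u⁻¹ : FC n)) = 1 := by
      rw [Units.mul_inv, map_one]
    rw [map_mul, hu, one_mul] at h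
    exact h

/-- The sum `Ĉ` of all elements of `C` inside the group algebra. -/
def hatC (n : ℕ) : FC n := ∑ g : Cgrp n, MonoidAlgebra.of (ZMod 2) (Cgrp n) g

/-- The sum `Ĉ²` of all elements of the subgroup `C²` of squares. -/
def hatCsq (n : ℕ) : FC n :=
  ∑ g ∈ Finset.image (fun h : Cgrp n => h * h) Finset.univ,
    MonoidAlgebra.of (ZMod 2) (Cgrp n) g

/-- The subspace `F₂C²` of `F₂C` spanned by the subgroup of squares. -/
def sqSpan (n : ℕ) : Submodule (ZMod 2) (FC n) :=
  Submodule.span (ZMod 2) (Set.range fun g : Cgrp n => MonoidAlgebra.of (ZMod 2) (Cgrp n) (g * g))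

lemma hatC_mul_hatC (n : ℕ) (hn : 1 ≤ n) : hatC n * hatC n = 0 := by
  classical
  unfold hatC
  rw [Finset.sum_mul_sum]
  have h1 : ∀ g : Cgrp n,
      ∑ h : Cgrp n, MonoidAlgebra.of (ZMod 2) (Cgrp n) g * MonoidAlgebra.of (ZMod 2) (Cgrp n) h
        = hatC n := by
    intro g
    have h2 : ∀ h : Cgrp n,
        MonoidAlgebra.of (ZMod 2) (Cgrp n) g * MonoidAlgebra.of (ZMod 2) (Cgrp n) h
          = MonoidAlgebra.of (ZMod 2) (Cgrp n) (g * h) := by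
      intro h; rw [map_mul]
    unfold hatC
    calc ∑ h : Cgrp n, MonoidAlgebra.of (ZMod 2) (Cgrp n) g * MonoidAlgebra.of (ZMod 2) (Cgrp n) h
        = ∑ h : Cgrp n, MonoidAlgebra.of (ZMod 2) (Cgrp n) (g * h) := by
          exact Finset.sum_congr rfl fun h _ => h2 h
      _ = ∑ h : Cgrp n, MonoidAlgebra.of (ZMod 2) (Cgrp n) h :=
          Fintype.sum_equiv (Equiv.mulLeft g) _ _ (fun h => rfl)
  calc (∑ g : Cgrp n, ∑ h : Cgrp n,
        MonoidAlgebra.of (ZMod 2) (Cgrp n) g * MonoidAlgebra.of (ZMod 2) (Cgrp n) h)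
      = ∑ _g : Cgrp n, hatC n := Finset.sum_congr rfl fun g _ => h1 g
    _ = (Fintype.card (Cgrp n)) • hatC n := by rw [Finset.sum_const, Finset.card_univ]
    _ = 0 := by
        rw [← Nat.cast_smul_eq_nsmul (ZMod 2)]
        have hc : ((Fintype.card (Cgrp n) : ℕ) : ZMod 2) = 0 := by
          have : Fintype.card (Cgrp n) = 2 ^ n := by simp [Cgrp, ZMod.card]
          rw [this]
          push_cast
          rw [show ((2:ZMod 2) = 0) from rfl, zero_pow (by omega)]
        rw [hc, zero_smul]

lemma add_self_FC (n : ℕ) (x : FC n) : x + x = 0 := by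
  rw [← two_smul (ZMod 2) x, show ((2:ZMod 2) = 0) from rfl, zero_smul]

/-- `1 + Ĉ` as a unit of `F₂C` (it is its own inverse). -/
def uC (n : ℕ) (hn : 1 ≤ n) : (FC n)ˣ :=
  ⟨1 + hatC n, 1 + hatC n, by
    have h : (1 + hatC n) * (1 + hatC n) = 1 + (hatC n + hatC n) + hatC n * hatC n := by ring
    rw [h, add_self_FC, hatC_mul_hatC n hn, add_zero, add_zero], by
    have h : (1 + hatC n) * (1 + hatC n) = 1 + (hatC n + hatC n) + hatC n * hatC n := by ring
    rw [h, add_self_FC, hatC_mul_hatC n hn, add_zero, add_zero]⟩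



/-! ### Auxiliary machinery -/

instance FC_charP (n : ℕ) : CharP (FC n) 2 :=
  charP_of_injective_algebraMap' (ZMod 2) 2

/-- The group algebra `F₂[ℤ/2]`. -/
abbrev TT : Type := MonoidAlgebra (ZMod 2) (Multiplicative (ZMod 2))

instance TT_charP : CharP TT 2 := charP_of_injective_algebraMap' (ZMod 2) 2

/-- The generator of `ℤ/2` inside `F₂[ℤ/2]`. -/
def tT : TT := MonoidAlgebra.of (ZMod 2) (Multiplicative (ZMod 2)) (Multiplicative.ofAdd 1)

/-- Augmentation of `F₂[ℤ/2]`. -/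
def aug2 : TT →ₐ[ZMod 2] ZMod 2 := MonoidAlgebra.lift (ZMod 2) _ _ 1

/-- Parity homomorphism `C → ℤ/2`. -/
def par (n : ℕ) (hn : 3 ≤ n) : Cgrp n →* Multiplicative (ZMod 2) :=
  AddMonoidHom.toMultiplicative
    (ZMod.castHom (dvd_pow_self 2 (by omega : n ≠ 0)) (ZMod 2)).toAddMonoidHom

/-- The induced algebra map `F₂C → F₂[ℤ/2]`. -/
def PiT (n : ℕ) (hn : 3 ≤ n) : FC n →ₐ[ZMod 2] TT :=
  MonoidAlgebra.lift (ZMod 2) TT (Cgrp n)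
    ((MonoidAlgebra.of (ZMod 2) (Multiplicative (ZMod 2))).comp (par n hn))

lemma par_apply (n : ℕ) (hn : 3 ≤ n) (g : Cgrp n) :
    par n hn g = Multiplicative.ofAdd
      (ZMod.castHom (dvd_pow_self 2 (by omega : n ≠ 0)) (ZMod 2) (Multiplicative.toAdd g)) := rfl

lemma aug_single (n : ℕ) (g : Cgrp n) (c : ZMod 2) :
    aug n (MonoidAlgebra.single g c) = c := by
  rw [aug, MonoidAlgebra.lift_single]
  simp

lemma aug2_single (g : Multiplicative (ZMod 2)) (c : ZMod 2) :
    aug2 (MonoidAlgebra.single g c) = c := by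
  rw [aug2, MonoidAlgebra.lift_single]
  simp

lemma PiT_single (n : ℕ) (hn : 3 ≤ n) (g : Cgrp n) (c : ZMod 2) :
    PiT n hn (MonoidAlgebra.single g c) = MonoidAlgebra.single (par n hn g) c := by
  rw [PiT, MonoidAlgebra.lift_single]
  simp only [MonoidHom.coe_comp, Function.comp_apply, MonoidAlgebra.of_apply,
    MonoidAlgebra.smul_single', mul_one]

lemma PiT_of (n : ℕ) (hn : 3 ≤ n) (g : Cgrp n) :
    PiT n hn (MonoidAlgebra.of (ZMod 2) (Cgrp n) g)
      = MonoidAlgebra.of (ZMod 2) (Multiplicative (ZMod 2)) (par n hn g) := by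
  rw [MonoidAlgebra.of_apply, MonoidAlgebra.of_apply, PiT_single]

lemma A_pow_nat (n : ℕ) (k : ℕ) :
    (A n) ^ k = MonoidAlgebra.of (ZMod 2) (Cgrp n)
      (Multiplicative.ofAdd ((k : ZMod (2 ^ n)))) := by
  rw [A, ← map_pow]
  congr 1
  show Multiplicative.ofAdd (1 : ZMod (2 ^ n)) ^ k = _
  rw [← ofAdd_nsmul]
  congr 1
  rw [nsmul_eq_mul, mul_one]

lemma A_pow_card (n : ℕ) : (A n) ^ (2 ^ n) = 1 := by
  rw [A_pow_nat]
  have : ((2 ^ n : ℕ) : ZMod (2 ^ n)) = 0 := ZMod.natCast_self _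
  rw [this]
  exact map_one _

/-- `x = 1 + a`. -/
def Xe (n : ℕ) : FC n := 1 + A n

lemma Xe_pow_card (n : ℕ) : (Xe n) ^ (2 ^ n) = 0 := by
  rw [Xe, add_pow_char_pow, one_pow, A_pow_card]
  exact add_self_FC n 1

lemma A_eq_Xe_add_one (n : ℕ) : A n = Xe n + 1 := by
  rw [Xe]
  have : (1 : FC n) + A n + 1 = A n + (1 + 1) := by ring
  rw [this, add_self_FC n 1, add_zero]

/-- `W = x^(2^n - 1)`. -/
def Wel (n : ℕ) : FC n := (Xe n) ^ (2 ^ n - 1)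

/-- `X2 = x^(2^n - 2)`. -/
def X2 (n : ℕ) : FC n := (Xe n) ^ (2 ^ n - 2)

lemma Xe_mul_Wel (n : ℕ) (hn : 3 ≤ n) : Xe n * Wel n = 0 := by
  rw [Wel, ← pow_succ']
  have h : 2 ^ n - 1 + 1 = 2 ^ n := by
    have : 1 ≤ 2 ^ n := Nat.one_le_two_pow
    omega
  rw [h, Xe_pow_card]

lemma Xe_mul_X2 (n : ℕ) (hn : 3 ≤ n) : Xe n * X2 n = Wel n := by
  rw [X2, Wel, ← pow_succ']
  congr 1
  have : 4 ≤ 2 ^ n := by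
    calc 4 = 2 ^ 2 := rfl
    _ ≤ 2 ^ n := Nat.pow_le_pow_right (by norm_num) (by omega)
  omega

lemma A_mul_Wel (n : ℕ) (hn : 3 ≤ n) : A n * Wel n = Wel n := by
  rw [A_eq_Xe_add_one, add_mul, Xe_mul_Wel n hn, one_mul, zero_add]

lemma A_mul_X2 (n : ℕ) (hn : 3 ≤ n) : A n * X2 n = X2 n + Wel n := by
  rw [A_eq_Xe_add_one, add_mul, Xe_mul_X2 n hn, one_mul, add_comm]

lemma A_pow_mul_Wel (n : ℕ) (hn : 3 ≤ n) (k : ℕ) : (A n) ^ k * Wel n = Wel n := by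
  induction k with
  | zero => rw [pow_zero, one_mul]
  | succ k ih => rw [pow_succ, mul_assoc, A_mul_Wel n hn, ih]

lemma A_pow_mul_X2 (n : ℕ) (hn : 3 ≤ n) (k : ℕ) :
    (A n) ^ k * X2 n = X2 n + (k : ZMod 2) • Wel n := by
  induction k with
  | zero => simp
  | succ k ih =>
    rw [pow_succ, mul_assoc, A_mul_X2 n hn, mul_add, ih, A_pow_mul_Wel n hn]
    push_cast
    generalize (k : ZMod 2) = z
    rw [add_smul, one_smul]
    abel

lemma of_mul_X2 (n : ℕ) (hn : 3 ≤ n) (g : Cgrp n) :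
    MonoidAlgebra.of (ZMod 2) (Cgrp n) g * X2 n
      = X2 n + (((Multiplicative.toAdd g).val : ZMod 2)) • Wel n := by
  have hNZ : NeZero (2 ^ n) := ⟨by positivity⟩
  have hg : MonoidAlgebra.of (ZMod 2) (Cgrp n) g = (A n) ^ ((Multiplicative.toAdd g).val) := by
    rw [A_pow_nat]
    congr 1
    rw [ZMod.natCast_val, ZMod.cast_id]
    exact (ofAdd_toAdd g).symm
  rw [hg, A_pow_mul_X2 n hn]

lemma par_of_val (n : ℕ) (hn : 3 ≤ n) (g : Cgrp n) :
    par n hn g = Multiplicative.ofAdd (((Multiplicative.toAdd g).val : ZMod 2)) := by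
  have hNZ : NeZero (2 ^ n) := ⟨by positivity⟩
  rw [par_apply]
  congr 1
  conv_lhs => rw [show (Multiplicative.toAdd g)
    = (((Multiplicative.toAdd g).val : ℕ) : ZMod (2 ^ n)) by rw [ZMod.natCast_val, ZMod.cast_id]]
  rw [map_natCast]

/-- The key multiplication lemma: `r · x^(2^n-2) = aug(r) x^(2^n-2) + Π₁(r) x^(2^n-1)`. -/
lemma key_mul (n : ℕ) (hn : 3 ≤ n) (r : FC n) :
    r * X2 n = aug n r • X2 n
      + ((PiT n hn r).coeff (Multiplicative.ofAdd (1 : ZMod 2))) • Wel n := by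
  induction r using MonoidAlgebra.induction_on with
  | of g =>
    rw [of_mul_X2 n hn, MonoidAlgebra.of_apply, PiT_single, aug_single, one_smul,
      MonoidAlgebra.coeff_single, Finsupp.single_apply, par_of_val n hn]
    congr 1
    generalize (((Multiplicative.toAdd g).val : ZMod 2)) = z
    congr 1
    revert z; decide
  | add f g hf hg =>
    rw [add_mul, hf, hg, map_add, map_add, MonoidAlgebra.coeff_add, Finsupp.add_apply, add_smul, add_smul]
    abel
  | smul c f hf =>
    rw [smul_mul_assoc, hf, map_smul, map_smul, MonoidAlgebra.coeff_smul, Finsupp.smul_apply, smul_add,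
      smul_smul, smul_smul, smul_eq_mul, smul_eq_mul]

/-! ### Facts about `TT` -/

lemma tT_def : tT = MonoidAlgebra.single (Multiplicative.ofAdd (1 : ZMod 2)) 1 := rfl

lemma tT_mul_tT : tT * tT = 1 := by
  rw [tT, ← map_mul]
  have : Multiplicative.ofAdd (1 : ZMod 2) * Multiplicative.ofAdd (1 : ZMod 2) = 1 := by decide
  rw [this, map_one]

lemma tT_sq : tT ^ 2 = 1 := by rw [pow_two, tT_mul_tT]

lemma tT_pow_odd {i : ℕ} (h : Odd i) : tT ^ i = tT := by
  obtain ⟨k, rfl⟩ := h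
  rw [show 2 * k + 1 = 2 * k + 1 from rfl, pow_succ, pow_mul, tT_sq, one_pow, one_mul]

lemma TT_add_self (x : TT) : x + x = 0 := CharTwo.add_self_eq_zero x

lemma mul_self_TT (r : TT) : r * r = aug2 r • 1 := by
  induction r using MonoidAlgebra.induction_on with
  | of g =>
    rw [MonoidAlgebra.of_apply, MonoidAlgebra.single_mul_single]
    have hg : g * g = 1 := by
      have : ∀ z : Multiplicative (ZMod 2), z * z = 1 := by decide
      exact this g
    rw [hg, mul_one, aug2_single, one_smul]
    rfl
  | add f g hf hg =>
    have expand : (f + g) * (f + g) = f * f + g * g + (f * g + f * g) := by ring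
    rw [expand, TT_add_self, add_zero, hf, hg, map_add, add_smul]
  | smul c f hf =>
    rw [smul_mul_smul_comm, hf, smul_smul, map_smul, smul_eq_mul]
    have hcc : c * c = c := by revert c; decide
    rw [hcc]

lemma aug2_PiT (n : ℕ) (hn : 3 ≤ n) (r : FC n) : aug2 (PiT n hn r) = aug n r := by
  have h : aug2.comp (PiT n hn) = aug n := by
    apply MonoidAlgebra.algHom_ext
    intro g
    simp only [AlgHom.coe_comp, Function.comp_apply]
    rw [PiT_single, aug2_single, aug_single]
    exact Subsingleton.elim _ _
  exact DFunLike.congr_fun h r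

lemma aug2_tT : aug2 tT = 1 := by rw [tT_def, aug2_single]

lemma tT_apply_one : tT.coeff (Multiplicative.ofAdd (1 : ZMod 2)) = 1 := by
  rw [tT_def, MonoidAlgebra.coeff_single, Finsupp.single_apply, if_pos rfl]

/-! ### Compatibility of `PiT` with the involutions -/

lemma PiT_starOne (n : ℕ) (hn : 3 ≤ n) (r : FC n) :
    PiT n hn (starOne n r) = PiT n hn r := by
  induction r using MonoidAlgebra.induction_on with
  | of g =>
    have h1 : starOne n (MonoidAlgebra.of (ZMod 2) (Cgrp n) g)
        = MonoidAlgebra.single g⁻¹ (1 : ZMod 2) := by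
      rw [MonoidAlgebra.of_apply, starOne]
      simp only [MonoidAlgebra.domCongr_single]
      rfl
    rw [h1, MonoidAlgebra.of_apply, PiT_single, PiT_single, map_inv]
    congr 1
    have : ∀ z : Multiplicative (ZMod 2), z⁻¹ = z := by decide
    exact this _
  | add f g hf hg => rw [map_add, map_add, map_add, hf, hg]
  | smul c f hf => rw [map_smul, map_smul, map_smul, hf]

lemma castHom_cf (n : ℕ) (hn : 3 ≤ n) :
    ZMod.castHom (dvd_pow_self 2 (by omega : n ≠ 0)) (ZMod 2) (cf n) = 1 := by
  rw [cf, map_sub, map_pow, map_one]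
  have h2 : (ZMod.castHom (dvd_pow_self 2 (by omega : n ≠ 0)) (ZMod 2)) (2 : ZMod (2 ^ n)) = 0 := by
    have : ((2 : ℕ) : ZMod (2 ^ n)) = (2 : ZMod (2 ^ n)) := by push_cast; ring
    rw [← this, map_natCast]
    decide
  rw [h2, zero_pow (by omega : n - 1 ≠ 0)]
  decide

lemma PiT_starTwo (n : ℕ) (hn : 3 ≤ n) (r : FC n) :
    PiT n hn (starTwo n (by linarith) r) = PiT n hn r := by
  induction r using MonoidAlgebra.induction_on with
  | of g =>
    have h1 : starTwo n (by linarith) (MonoidAlgebra.of (ZMod 2) (Cgrp n) g)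
        = MonoidAlgebra.single (theta n (by linarith) g) (1 : ZMod 2) := by
      rw [MonoidAlgebra.of_apply, starTwo]
      simp only [MonoidAlgebra.domCongr_single]
    rw [h1, MonoidAlgebra.of_apply, PiT_single, PiT_single]
    congr 1
    rw [par_apply, par_apply]
    congr 1
    show (ZMod.castHom _ (ZMod 2)) (cf n * Multiplicative.toAdd g) = _
    rw [map_mul, castHom_cf n hn, one_mul]
  | add f g hf hg => rw [map_add, map_add, map_add, hf, hg]
  | smul c f hf => rw [map_smul, map_smul, map_smul, hf]

/-! ### The geometric sum factor -/

lemma sum_tT_pow (k : ℕ) :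
    (∑ j ∈ Finset.range (2 * k + 1), tT ^ j) = (k : ZMod 2) • (1 + tT) + 1 := by
  induction k with
  | zero => simp
  | succ k ih =>
    have h : 2 * (k + 1) + 1 = (2 * k + 1) + 1 + 1 := by ring
    rw [h, Finset.sum_range_succ, Finset.sum_range_succ, ih]
    have h1 : tT ^ (2 * k + 1) = tT := tT_pow_odd ⟨k, rfl⟩
    have h2 : tT ^ (2 * k + 1 + 1) = 1 := by
      rw [show 2 * k + 1 + 1 = 2 * (k + 1) from by ring, pow_mul, tT_sq, one_pow]
    rw [h1, h2]
    push_cast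
    generalize (k : ZMod 2) = z
    rw [add_smul, one_smul]
    abel

/-- `s = 1 + a + ⋯ + a^(2^(n-1)-2)`, the cofactor with `1 + a^(2^(n-1)-1) = (1+a) s`. -/
def sG (n : ℕ) : FC n := ∑ j ∈ Finset.range (2 ^ (n - 1) - 1), (A n) ^ j

lemma sG_factor (n : ℕ) (hn : 3 ≤ n) : 1 + Gel n (cf n) = Xe n * sG n := by
  have hgeom : sG n * (A n - 1) = (A n) ^ (2 ^ (n - 1) - 1) - 1 := geom_sum_mul (A n) _
  have hsub : A n - 1 = Xe n := by
    rw [CharTwo.sub_eq_add, Xe, add_comm]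
  have hpow : (A n) ^ (2 ^ (n - 1) - 1) = Gel n (cf n) := by
    rw [A_pow_nat, Gel]
    congr 2
    rw [cf]
    have h1 : 1 ≤ 2 ^ (n - 1) := Nat.one_le_two_pow
    push_cast [Nat.cast_sub h1]
    ring
  rw [hsub, hpow] at hgeom
  rw [CharTwo.sub_eq_add, add_comm] at hgeom
  rw [← hgeom, mul_comm]

lemma PiT_A (n : ℕ) (hn : 3 ≤ n) : PiT n hn (A n) = tT := by
  rw [A, PiT_of, tT]
  congr 1
  rw [par_apply]
  congr 1
  show (ZMod.castHom _ (ZMod 2)) (1 : ZMod (2 ^ n)) = 1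
  rw [map_one]

lemma PiT_sG (n : ℕ) (hn : 3 ≤ n) : PiT n hn (sG n) = tT := by
  rw [sG, map_sum]
  have hb : 2 ^ (n - 1) - 1 = 2 * (2 ^ (n - 2) - 1) + 1 := by
    have h1 : 2 ^ (n - 1) = 2 * 2 ^ (n - 2) := by
      rw [← pow_succ']
      congr 1
      omega
    have h2 : 1 ≤ 2 ^ (n - 2) := Nat.one_le_two_pow
    omega
  have : ∀ j ∈ Finset.range (2 ^ (n - 1) - 1), PiT n hn ((A n) ^ j) = tT ^ j := by
    intro j _
    rw [map_pow, PiT_A n hn]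
  rw [Finset.sum_congr rfl this, hb, sum_tT_pow]
  have hodd : ((2 ^ (n - 2) - 1 : ℕ) : ZMod 2) = 1 := by
    have h1 : 1 ≤ 2 ^ (n - 2) := Nat.one_le_two_pow
    rw [Nat.cast_sub h1]
    have : ((2 ^ (n - 2) : ℕ) : ZMod 2) = 0 := by
      push_cast
      rw [show ((2 : ZMod 2)) = 0 from rfl, zero_pow (by omega : n - 2 ≠ 0)]
    rw [this]
    decide
  rw [hodd, one_smul]
  have : (1 : TT) + tT + 1 = tT + (1 + 1) := by ring
  rw [this, TT_add_self, add_zero]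

lemma Gel_neg_one_factor (n : ℕ) (hn : 3 ≤ n) :
    1 + Gel n (-1) = Gel n (-1) * Xe n := by
  rw [Xe, mul_add, mul_one]
  have h : Gel n (-1) * A n = 1 := by
    rw [Gel, A, ← map_mul]
    have : Multiplicative.ofAdd (-1 : ZMod (2 ^ n)) * agen n = 1 := by
      rw [agen]
      show Multiplicative.ofAdd ((-1 : ZMod (2 ^ n)) + 1) = 1
      rw [neg_add_cancel]
      rfl
    rw [this, map_one]
  rw [h, add_comm]

lemma PiT_Gel_neg_one (n : ℕ) (hn : 3 ≤ n) : PiT n hn (Gel n (-1)) = tT := by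
  rw [Gel, PiT_of, tT]
  congr 1
  rw [par_apply]
  congr 1
  show (ZMod.castHom _ (ZMod 2)) (-1 : ZMod (2 ^ n)) = 1
  rw [map_neg, map_one]
  decide

lemma starOne_A (n : ℕ) : starOne n (A n) = Gel n (-1) := by
  rw [A, MonoidAlgebra.of_apply, starOne, MonoidAlgebra.domCongr_single, Gel,
    MonoidAlgebra.of_apply]
  congr 1

lemma starTwo_A (n : ℕ) (hn : 3 ≤ n) : starTwo n (by linarith) (A n) = Gel n (cf n) := by
  rw [A, MonoidAlgebra.of_apply, starTwo, MonoidAlgebra.domCongr_single, Gel,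
    MonoidAlgebra.of_apply]
  congr 1
  show Multiplicative.ofAdd (cf n * Multiplicative.toAdd (agen n)) = _
  rw [agen]
  show Multiplicative.ofAdd (cf n * 1) = _
  rw [mul_one]

/-! ### Facts about `sqSpan` -/

lemma of_sq_mem_sqSpan (n : ℕ) (g : Cgrp n) :
    MonoidAlgebra.of (ZMod 2) (Cgrp n) (g * g) ∈ sqSpan n :=
  Submodule.subset_span ⟨g, rfl⟩

lemma one_mem_sqSpan (n : ℕ) : (1 : FC n) ∈ sqSpan n := by
  have h := of_sq_mem_sqSpan n 1
  rwa [mul_one, map_one] at h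

lemma mul_mem_sqSpan (n : ℕ) {p q : FC n} (hp : p ∈ sqSpan n) (hq : q ∈ sqSpan n) :
    p * q ∈ sqSpan n := by
  induction hp, hq using Submodule.span_induction₂ with
  | mem_mem x y hx hy =>
    obtain ⟨g, rfl⟩ := hx
    obtain ⟨k, rfl⟩ := hy
    rw [← map_mul]
    have : g * g * (k * k) = (g * k) * (g * k) := by
      rw [mul_mul_mul_comm]
    rw [this]
    exact of_sq_mem_sqSpan n _
  | zero_left y hy => rw [zero_mul]; exact Submodule.zero_mem _
  | zero_right x hx => rw [mul_zero]; exact Submodule.zero_mem _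
  | add_left x y z hx hy hz h1 h2 => rw [add_mul]; exact Submodule.add_mem _ h1 h2
  | add_right x y z hx hy hz h1 h2 => rw [mul_add]; exact Submodule.add_mem _ h1 h2
  | smul_left c x y hx hy h => rw [smul_mul_assoc]; exact Submodule.smul_mem _ _ h
  | smul_right c x y hx hy h => rw [mul_smul_comm]; exact Submodule.smul_mem _ _ h

lemma Xe_sq_mem_sqSpan (n : ℕ) : (Xe n) ^ 2 ∈ sqSpan n := by
  have h : (Xe n) ^ 2 = 1 + A n * A n := by
    rw [Xe, add_pow_char, one_pow, pow_two]
  rw [h]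
  refine Submodule.add_mem _ (one_mem_sqSpan n) ?_
  have : A n * A n = MonoidAlgebra.of (ZMod 2) (Cgrp n) (agen n * agen n) := by
    rw [map_mul, A]
  rw [this]
  exact of_sq_mem_sqSpan n _

lemma Xe_pow_even_mem_sqSpan (n : ℕ) (k : ℕ) : (Xe n) ^ (2 * k) ∈ sqSpan n := by
  induction k with
  | zero => simpa using one_mem_sqSpan n
  | succ k ih =>
    have h : 2 * (k + 1) = 2 * k + 2 := by ring
    rw [h, pow_add]
    exact mul_mem_sqSpan n ih (Xe_sq_mem_sqSpan n)

lemma sqSpan_apply_odd (n : ℕ) (hn : 3 ≤ n) {p : FC n} (hp : p ∈ sqSpan n) :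
    p.coeff (Multiplicative.ofAdd (1 : ZMod (2 ^ n))) = 0 := by
  induction hp using Submodule.span_induction with
  | mem x hx =>
    obtain ⟨g, rfl⟩ := hx
    simp only [MonoidAlgebra.of_apply, MonoidAlgebra.coeff_single, Finsupp.single_apply]
    rw [if_neg]
    intro hcontra
    have h2 : Multiplicative.toAdd (g * g) = (1 : ZMod (2 ^ n)) := by
      rw [hcontra]
      rfl
    have h3 : Multiplicative.toAdd g + Multiplicative.toAdd g = (1 : ZMod (2 ^ n)) := h2
    have h4 := congrArg (ZMod.castHom (dvd_pow_self 2 (by omega : n ≠ 0)) (ZMod 2)) h3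
    rw [map_add, map_one] at h4
    have h5 : ∀ z : ZMod 2, z + z = 0 := by decide
    rw [h5] at h4
    exact one_ne_zero h4.symm
  | zero => rfl
  | add x y hx hy h1 h2 => rw [MonoidAlgebra.coeff_add, Finsupp.add_apply, h1, h2, add_zero]
  | smul c x hx h => rw [MonoidAlgebra.coeff_smul, Finsupp.smul_apply, h, smul_zero]

lemma Wel_apply_one (n : ℕ) (hn : 3 ≤ n) :
    (Wel n).coeff (Multiplicative.ofAdd (1 : ZMod (2 ^ n))) = 1 := by
  have hNZ : NeZero (2 ^ n) := ⟨by positivity⟩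
  have h8 : 8 ≤ 2 ^ n := by
    calc 8 = 2 ^ 3 := rfl
    _ ≤ 2 ^ n := Nat.pow_le_pow_right (by norm_num) hn
  set N := 2 ^ n - 1 with hN
  have hNlt : N < 2 ^ n := by
    have : 1 ≤ 2 ^ n := Nat.one_le_two_pow
    omega
  have hexp : Wel n = ∑ k ∈ Finset.range (N + 1),
      (Nat.choose N k : ZMod 2) • MonoidAlgebra.single
        (Multiplicative.ofAdd ((k : ZMod (2 ^ n)))) (1 : ZMod 2) := by
    rw [Wel, Xe, add_comm, add_pow]
    apply Finset.sum_congr rfl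
    intro k _
    rw [one_pow, mul_one]
    rw [A_pow_nat, MonoidAlgebra.of_apply, mul_comm]
    rw [← nsmul_eq_mul, ← Nat.cast_smul_eq_nsmul (ZMod 2)]
  rw [hexp, MonoidAlgebra.coeff_sum, Finsupp.finset_sum_apply]
  have hterm : ∀ k ∈ Finset.range (N + 1), k ≠ 1 →
      ((Nat.choose N k : ZMod 2) • MonoidAlgebra.single
        (Multiplicative.ofAdd ((k : ZMod (2 ^ n)))) (1 : ZMod 2)).coeff
        (Multiplicative.ofAdd (1 : ZMod (2 ^ n))) = 0 := by
    intro k hk hk1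
    rw [MonoidAlgebra.coeff_smul, Finsupp.smul_apply, MonoidAlgebra.coeff_single, Finsupp.single_apply, if_neg, smul_zero]
    intro hcontra
    have h1 : ((k : ZMod (2 ^ n))) = (1 : ZMod (2 ^ n)) :=
      Multiplicative.ofAdd.injective hcontra
    have hklt : k < 2 ^ n := by
      have := Finset.mem_range.mp hk
      omega
    have h2 : k = 1 := by
      have hv := congrArg ZMod.val h1
      rw [ZMod.val_cast_of_lt hklt] at hv
      rwa [show (1 : ZMod (2 ^ n)) = ((1 : ℕ) : ZMod (2 ^ n)) by norm_num,
        ZMod.val_cast_of_lt (by omega : 1 < 2 ^ n)] at hv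

    exact hk1 h2
  rw [Finset.sum_eq_single_of_mem 1 (Finset.mem_range.mpr (by omega)) hterm]
  rw [MonoidAlgebra.coeff_smul, Finsupp.smul_apply, MonoidAlgebra.coeff_single, Finsupp.single_apply, Nat.cast_one, if_pos rfl]
  rw [Nat.choose_one_right]
  have hNodd : ((N : ℕ) : ZMod 2) = 1 := by
    rw [hN, Nat.cast_sub Nat.one_le_two_pow]
    have : ((2 ^ n : ℕ) : ZMod 2) = 0 := by
      push_cast
      rw [show ((2 : ZMod 2)) = 0 from rfl, zero_pow (by omega : n ≠ 0)]
    rw [this]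
    decide
  rw [hNodd, smul_eq_mul, one_mul]


/-- For `C` cyclic of order `2^n`, `n ≥ 3`, `σ ∈ {*, ⊛}`, and `i` odd with `i < 2^(n-1)`,
the set `H_i^σ = { h ∈ V(F₂C) : h h^σ (1+a)^i (1+a^σ)^i ∈ F₂C² }` is empty: no normalized
unit `h` satisfies `h h^σ (1+a)^i (1+a^σ)^i ∈ F₂C²`. -/
theorem stmt15 (n : ℕ) (hn : 3 ≤ n)
    (σ : FC n ≃ₐ[ZMod 2] FC n) (hσ : σ = starOne n ∨ σ = starTwo n (by omega))
    (i : ℕ) (hodd : Odd i) (hi : i < 2 ^ (n - 1)) :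
    ∀ h : (FC n)ˣ, aug n (↑h : FC n) = 1 →
      (↑h : FC n) * σ (↑h : FC n) * (1 + A n) ^ i * (1 + σ (A n)) ^ i ∉ sqSpan n := by
  intro h haug hmem
  -- unified factorization data for the two involutions
  obtain ⟨q, hfac, hPiq, hPiσ⟩ :
      ∃ q : FC n, 1 + σ (A n) = q * Xe n ∧ PiT n hn q = tT ∧
        (∀ f : FC n, PiT n hn (σ f) = PiT n hn f) := by
    rcases hσ with hσ | hσ
    · refine ⟨Gel n (-1), ?_, PiT_Gel_neg_one n hn, ?_⟩
      · rw [hσ, starOne_A, Gel_neg_one_factor n hn]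
      · intro f; rw [hσ]; exact PiT_starOne n hn f
    · refine ⟨sG n, ?_, PiT_sG n hn, ?_⟩
      · rw [hσ, starTwo_A n hn, sG_factor n hn, mul_comm]
      · intro f; rw [hσ]; exact PiT_starTwo n hn f
  have hXe : (1 : FC n) + A n = Xe n := rfl
  have hpow2 : 2 ^ n = 2 * 2 ^ (n - 1) := by
    rw [← pow_succ']
    congr 1
    omega
  have h2le : 1 ≤ 2 ^ (n - 1) := Nat.one_le_two_pow
  set j := 2 ^ (n - 1) - 1 - i with hj
  set r : FC n := (↑h : FC n) * σ (↑h : FC n) * q ^ i with hr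
  have hfacpow : (1 + σ (A n)) ^ i = q ^ i * (Xe n) ^ i := by rw [hfac, mul_pow]
  have hE : (↑h : FC n) * σ (↑h : FC n) * (1 + A n) ^ i * (1 + σ (A n)) ^ i
      = r * (Xe n) ^ (2 * i) := by
    rw [hfacpow, hXe, hr]
    ring
  have hPir : PiT n hn r = tT := by
    rw [hr, map_mul, map_mul, map_pow, hPiq, hPiσ, mul_self_TT, aug2_PiT, haug,
      one_smul, one_mul, tT_pow_odd hodd]
  have haugr : aug n r = 1 := by
    rw [← aug2_PiT n hn r, hPir, aug2_tT]
  have hkey : r * X2 n = X2 n + Wel n := by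
    rw [key_mul n hn r, hPir, haugr, one_smul, tT_apply_one, one_smul]
  have hiexp : 2 * i + 2 * j = 2 ^ n - 2 := by omega
  have hX2def : X2 n = (Xe n) ^ (2 ^ n - 2) := rfl
  have hprod : (↑h : FC n) * σ (↑h : FC n) * (1 + A n) ^ i * (1 + σ (A n)) ^ i
      * (Xe n) ^ (2 * j) = r * X2 n := by
    rw [hE, hX2def, mul_assoc, ← pow_add, hiexp]
  have hW : Wel n ∈ sqSpan n := by
    have hmemprod : r * X2 n ∈ sqSpan n := by
      rw [← hprod]
      exact mul_mem_sqSpan n hmem (Xe_pow_even_mem_sqSpan n j)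
    have hX2mem : X2 n ∈ sqSpan n := by
      have h' := Xe_pow_even_mem_sqSpan n (2 ^ (n - 1) - 1)
      rw [hX2def, show 2 ^ n - 2 = 2 * (2 ^ (n - 1) - 1) from by omega]
      exact h'
    have hsum := Submodule.add_mem _ hmemprod hX2mem
    rw [hkey] at hsum
    rwa [show X2 n + Wel n + X2 n = Wel n + (X2 n + X2 n) from by ring,
      add_self_FC, add_zero] at hsum
  have hzero := sqSpan_apply_odd n hn hW
  rw [Wel_apply_one n hn] at hzero
  exact one_ne_zero hzero

end
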